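/- Fix an integer k ≥ 1 and define ε(1)_q = −1 if 0 ≤ q < k and ε(1)_q = +1 if k ≤ q < 2k, ε(2)_q = min(q+1, 2k−q−1) for 0 ≤ q < 2k, and λ(1,2)_m = (3/(2k³)) Σ_{q=0}^{2k−m−1} ε(1)_q ε(2)_{q+m} for 0 ≤ m ≤ 2k−1. Then k · Σ_{m=1}^{2k−1} (λ(1,2)_m)² → 3/4 as k → ∞. -/

import Mathlib

/-!
Write `c(k, m) = Σ_q ε(1)_q ε(2)_{q+m}`, so that `λ(1,2)_m = 3 c(k, m) / (2k³)`. For `m ≤ k` the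
range of `q` splits at `k - m` and `k` into three blocks on which the summand is affine in `q`, which
gives `c(k, m) = (3m² + 3m - 4km - 2k) / 2`; for `m = 2k - d > k` only `ε(1) = -1` occurs and
`c(k, m) = -d(d - 1) / 2`. Summing the squares of these polynomials yields the exact identity
`Σ_{m=1}^{2k-1} c(k, m)² = (k⁵ + k³ - 3k² + k) / 3`, hence
`k Σ λ(1,2)_m² = 3/4 (1 + k⁻² - 3k⁻³ + k⁻⁴)`.
-/

open Filter

noncomputable def eps1 (k q : ℕ) : ℝ := if q < k then -1 else 1

noncomputable def eps2 (k q : ℕ) : ℝ := min ((q : ℝ) + 1) (2 * (k : ℝ) - (q : ℝ) - 1)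

noncomputable def lam12 (k m : ℕ) : ℝ :=
  (3 / (2 * (k : ℝ) ^ 3)) * ∑ q ∈ Finset.range (2 * k - m), eps1 k q * eps2 k (q + m)

open Finset

noncomputable def crossSum (k m : ℕ) : ℝ := ∑ q ∈ range (2 * k - m), eps1 k q * eps2 k (q + m)

lemma lam12_eq_mul_crossSum (k m : ℕ) : lam12 k m = 3 / (2 * (k : ℝ) ^ 3) * crossSum k m := rfl

lemma eps1_of_lt {k q : ℕ} (h : q < k) : eps1 k q = -1 := if_pos h

lemma eps1_of_le {k q : ℕ} (h : k ≤ q) : eps1 k q = 1 := if_neg h.not_gt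

lemma eps2_of_lt {k q : ℕ} (h : q < k) : eps2 k q = q + 1 := by
  have : (q : ℝ) + 1 ≤ k := by exact_mod_cast h
  exact min_eq_left (by linarith)

lemma eps2_of_le {k q : ℕ} (h : k ≤ q + 1) : eps2 k q = 2 * k - q - 1 := by
  have : (k : ℝ) ≤ q + 1 := by exact_mod_cast h
  exact min_eq_right (by linarith)

lemma sum_range_affine (a b : ℝ) (n : ℕ) :
    ∑ q ∈ range n, (a + b * q) = n * a + b * (n * (n - 1) / 2) := by
  induction n with
  | zero => simp
  | succ n ih => rw [sum_range_succ, ih]; push_cast; ring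

lemma crossSum_of_le {k m : ℕ} (hm : m ≤ k) :
    crossSum k m = (3 * (m : ℝ) ^ 2 + 3 * m - 4 * k * m - 2 * k) / 2 := by
  obtain ⟨i, rfl⟩ := Nat.exists_eq_add_of_le hm
  have hlen : 2 * (m + i) - m = i + m + i := by omega
  have h₁ : ∑ q ∈ range i, eps1 (m + i) q * eps2 (m + i) (q + m) =
      ∑ q ∈ range i, (-(m + 1 : ℝ) + -1 * q) := by
    refine sum_congr rfl fun q hq => ?_
    rw [mem_range] at hq
    rw [eps1_of_lt (by omega), eps2_of_lt (by omega)]; push_cast; ring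
  have h₂ : ∑ q ∈ range m, eps1 (m + i) (i + q) * eps2 (m + i) (i + q + m) =
      ∑ q ∈ range m, ((1 - (m + i : ℝ)) + 1 * q) := by
    refine sum_congr rfl fun q hq => ?_
    rw [mem_range] at hq
    rw [eps1_of_lt (by omega), eps2_of_le (by omega)]; push_cast; ring
  have h₃ : ∑ q ∈ range i, eps1 (m + i) (i + m + q) * eps2 (m + i) (i + m + q + m) =
      ∑ q ∈ range i, ((i - 1 : ℝ) + -1 * q) := by
    refine sum_congr rfl fun q hq => ?_
    rw [mem_range] at hq
    rw [eps1_of_le (by omega), eps2_of_le (by omega)]; push_cast; ring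
  rw [crossSum, hlen, sum_range_add, sum_range_add, h₁, h₂, h₃, sum_range_affine,
    sum_range_affine, sum_range_affine]
  push_cast; ring

lemma crossSum_two_mul_sub {k d : ℕ} (hd : d < k) :
    crossSum k (2 * k - d) = -(d * (d - 1) : ℝ) / 2 := by
  have hlen : 2 * k - (2 * k - d) = d := by omega
  have h : ∑ q ∈ range d, eps1 k q * eps2 k (q + (2 * k - d)) =
      ∑ q ∈ range d, ((-(d : ℝ) + 1) + 1 * q) := by
    refine sum_congr rfl fun q hq => ?_
    rw [mem_range] at hq
    rw [eps1_of_lt (by omega), eps2_of_le (by omega), Nat.cast_add, Nat.cast_sub (by omega)]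
    push_cast; ring
  rw [crossSum, hlen, h, sum_range_affine]
  ring

lemma sum_range_sq_quadratic (x : ℝ) (n : ℕ) :
    ∑ m ∈ range n, (3 * ((m : ℝ) + 1) ^ 2 + 3 * (m + 1) - 4 * x * (m + 1) - 2 * x) ^ 2 =
      3 * n * (n + 1) * (n + 2) * (3 * n ^ 2 + 6 * n + 1) / 5 - 6 * x * n * (n + 1) ^ 2 * (n + 2)
        + 4 * x ^ 2 * n * (4 * n ^ 2 + 12 * n + 11) / 3 := by
  induction n with
  | zero => simp
  | succ n ih => rw [sum_range_succ, ih]; push_cast; ring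

lemma sum_range_sq_mul_succ (n : ℕ) :
    ∑ j ∈ range n, ((j : ℝ) * (j + 1)) ^ 2 =
      ((n : ℝ) - 1) * n * (n + 1) * (3 * n ^ 2 - 2) / 15 := by
  induction n with
  | zero => simp
  | succ n ih => rw [sum_range_succ, ih]; push_cast; ring

lemma sum_sq_crossSum (n : ℕ) :
    ∑ m ∈ Icc 1 (2 * n + 1), crossSum (n + 1) m ^ 2 =
      ((n + 1 : ℝ) ^ 5 + (n + 1) ^ 3 - 3 * (n + 1) ^ 2 + (n + 1)) / 3 := by
  -- after reflection the upper half runs over `m = 2k - d` with `d = j + 1 < k = n + 1`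
  rw [← Ico_add_one_right_eq_Icc, sum_Ico_eq_sum_range,
    show 2 * n + 1 + 1 - 1 = (n + 1) + n by omega, sum_range_add, ← sum_range_reflect _ n]
  have low : ∀ m ∈ range (n + 1), crossSum (n + 1) (1 + m) ^ 2 =
      (3 * ((m : ℝ) + 1) ^ 2 + 3 * (m + 1) - 4 * (n + 1 : ℝ) * (m + 1) - 2 * (n + 1 : ℝ)) ^ 2
        / 4 := by
    intro m hm
    rw [mem_range] at hm
    rw [crossSum_of_le (by omega)]
    push_cast; ring
  have high : ∀ j ∈ range n, crossSum (n + 1) (1 + (n + 1 + (n - 1 - j))) ^ 2 =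
      ((j : ℝ) * (j + 1)) ^ 2 / 4 := by
    intro j hj
    rw [mem_range] at hj
    rw [show 1 + (n + 1 + (n - 1 - j)) = 2 * (n + 1) - (j + 1) by omega,
      crossSum_two_mul_sub (by omega)]
    push_cast; ring
  rw [sum_congr rfl low, sum_congr rfl high, ← sum_div, ← sum_div, sum_range_sq_quadratic,
    sum_range_sq_mul_succ]
  push_cast; ring

lemma natCast_mul_sum_sq_lam12 {k : ℕ} (hk : 1 ≤ k) :
    (k : ℝ) * ∑ m ∈ Icc 1 (2 * k - 1), lam12 k m ^ 2 =
      3 / 4 * (1 + (k : ℝ)⁻¹ ^ 2 - 3 * (k : ℝ)⁻¹ ^ 3 + (k : ℝ)⁻¹ ^ 4) := by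
  obtain ⟨n, rfl⟩ := Nat.exists_eq_add_of_le' hk
  simp only [lam12_eq_mul_crossSum, mul_pow, ← mul_sum]
  rw [show 2 * (n + 1) - 1 = 2 * n + 1 by omega, sum_sq_crossSum]
  field_simp
  push_cast
  ring

/-- **The constant `3/4` in the asymptotic variance (Theorem 1 of the paper):**
`k Σ_{m=1}^{2k−1} λ(1,2)_m² → 3/4` as `k → ∞`. -/
theorem stmt_14 :
    Tendsto (fun k : ℕ => (k : ℝ) * ∑ m ∈ Finset.Icc 1 (2 * k - 1), (lam12 k m) ^ 2)
      atTop (nhds (3 / 4)) := by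
  have hpoly : Tendsto (fun x : ℝ => 3 / 4 * (1 + x ^ 2 - 3 * x ^ 3 + x ^ 4)) (nhds 0)
      (nhds (3 / 4)) := by
    simpa using
      (by fun_prop : Continuous fun x : ℝ => 3 / 4 * (1 + x ^ 2 - 3 * x ^ 3 + x ^ 4)).tendsto 0
  refine (hpoly.comp (tendsto_inv_atTop_zero.comp tendsto_natCast_atTop_atTop)).congr' ?_
  filter_upwards [eventually_ge_atTop 1] with k hk
  exact (natCast_mul_sum_sq_lam12 hk).symm
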